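/- arXiv:2003.06023 — 4 statements merged into one kernel-verified Lean document; each statement's English description precedes it below -/
import Mathlib

section
/- Conditional distribution of compliance types given covariates: let X : Ω → ℝ^k be a measurable covariate vector with generated σ-algebra 𝔪 = σ(X), and suppose: (i) the collection of all potential treatment statuses (D_i(z,z'))_{z,z'} is conditionally independent of (Z_i,Z_j) given 𝔪; (ii) almost surely D_i(1,1) ≥ D_i(1,0) ≥ D_i(0,1) ≥ D_i(0,0) and D_i(0,0) = D_i(0,1) = 0; (iii) p_{10}, p_{11} : Ω → ℝ are 𝔪-measurable with p_{10} = E[1{Z_i=1, Z_j=0} | 𝔪], p_{11} = E[1{Z_i=1, Z_j=1} | 𝔪] almost surely. Then almost surely E[ D_i · 1{Z_i=1, Z_j=0} | 𝔪 ] = E[ 1_{C_i} | 𝔪 ] · p_{10} and E[ D_i · 1{Z_i=1, Z_j=1} | 𝔪 ] = ( E[ 1_{C_i} | 𝔪 ] + E[ 1_{GC_i} | 𝔪 ] ) · p_{11}; i.e., P[C_i | X] = E[D_i | Z_i=1, Z_j=0, X] and P[GC_i | X] = E[D_i | Z_i=1, Z_j=1, X] − E[D_i | Z_i=1, Z_j=0,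 X]. -/
/-!
On the cell `{Zi = z, Zj = z'}` the observed status is `Di z z'`, so conditional independence of
the potential statuses from the instruments factorises `E[D · 1{Z = (z, z')} | m]` into
`P(Di z z' | m) · P(Z = (z, z') | m)`. One-sided noncompliance (`Di false true = 0`) makes
`{Di true false}` the complier event, and monotonicity `Di true false ≤ Di true true` splits
`{Di true true}` into compliers and group compliers.
-/

open MeasureTheory ProbabilityTheory

noncomputable def bInd (b : Bool) : ℝ := if b then 1 else 0

section Indicators

variable {Ω : Type*}

theorem bInd_mul_indicator_eq_indicator_inter (Di : Bool → Bool → Ω → Bool) (Zi Zj : Ω → Bool)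
    (z z' : Bool) :
    (fun ω => bInd (Di (Zi ω) (Zj ω) ω) *
        ({x | Zi x = z} ∩ {x | Zj x = z'}).indicator (fun _ => (1 : ℝ)) ω) =
      ({x | Di z z' x = true} ∩ ({x | Zi x = z} ∩ {x | Zj x = z'})).indicator fun _ => 1 := by
  funext ω
  simp only [Set.indicator_apply, Set.mem_inter_iff, Set.mem_ofPred_eq]
  split_ifs <;> simp_all [bInd]

theorem indicator_and_eq_false_ae_eq [MeasurableSpace Ω] {μ : Measure Ω} {f g : Ω → Bool}
    (hg : ∀ᵐ ω ∂μ, g ω = false) :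
    {x | f x = true ∧ g x = false}.indicator (fun _ => (1 : ℝ)) =ᵐ[μ]
      {x | f x = true}.indicator fun _ => 1 := by
  filter_upwards [hg] with ω hω
  simp [Set.indicator_apply, hω]

theorem indicator_eq_add_indicator_and_eq_false {f g : Ω → Bool} {ω : Ω} (hgf : g ω ≤ f ω) :
    {x | f x = true}.indicator (fun _ => (1 : ℝ)) ω =
      {x | g x = true}.indicator (fun _ => 1) ω +
        {x | f x = true ∧ g x = false}.indicator (fun _ => 1) ω := by
  rw [Bool.le_iff_imp] at hgf
  cases hf : f ω <;> cases hg : g ω <;> simp_all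

end Indicators

section PotentialOutcomes

variable {Ω : Type*} {m mΩ : MeasurableSpace Ω} [StandardBorelSpace Ω]
  {P : Measure Ω} [IsFiniteMeasure P] {hm : m ≤ mΩ}

theorem condExp_bInd_mul_indicator_ae_eq {Di : Bool → Bool → Ω → Bool} {Zi Zj : Ω → Bool}
    (hDi : ∀ z z', Measurable (Di z z')) (hZi : Measurable Zi) (hZj : Measurable Zj)
    (hCI : CondIndepFun m hm (fun ω z z' => Di z z' ω) (fun ω => (Zi ω, Zj ω)) P)
    (z z' : Bool) :
    P[fun ω => bInd (Di (Zi ω) (Zj ω) ω) *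
        ({x | Zi x = z} ∩ {x | Zj x = z'}).indicator (fun _ => (1 : ℝ)) ω | m] =ᵐ[P]
      fun ω => (P⟦{x | Di z z' x = true} | m⟧) ω *
        (P⟦{x | Zi x = z} ∩ {x | Zj x = z'} | m⟧) ω := by
  have hcell : (fun ω => (Zi ω, Zj ω)) ⁻¹' {(z, z')} = {x | Zi x = z} ∩ {x | Zj x = z'} := by
    rw [← Set.singleton_prod_singleton, Set.mk_preimage_prod]
    rfl
  have hfactor := (condIndepFun_iff_condExp_inter_preimage_eq_mul (by fun_prop)
    (hZi.prodMk hZj)).mp hCI {f | f z z' = true} {(z, z')}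
    ((by fun_prop : Measurable fun f : Bool → Bool → Bool => f z z')
      (measurableSet_singleton true)) (measurableSet_singleton _)
  rw [bInd_mul_indicator_eq_indicator_inter]
  rwa [hcell] at hfactor

end PotentialOutcomes

theorem stmt_16_general
    {Ω : Type*} [mΩ : MeasurableSpace Ω] [StandardBorelSpace Ω]
    (P : Measure Ω) [IsProbabilityMeasure P]
    (Di : Bool → Bool → Ω → Bool) (Zi Zj : Ω → Bool)
    (hDimeas : ∀ z z', Measurable (Di z z'))
    (hZi : Measurable Zi) (hZj : Measurable Zj)
    (m : MeasurableSpace Ω)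
    (hm_le : m ≤ mΩ)
    (hCI : CondIndepFun m hm_le
      (fun ω => (fun z z' => Di z z' ω))
      (fun ω => (Zi ω, Zj ω)) P)
    (hmono : ∀ᵐ ω ∂P,
      Di false false ω ≤ Di false true ω ∧ Di false true ω ≤ Di true false ω ∧
        Di true false ω ≤ Di true true ω)
    (hosn : ∀ᵐ ω ∂P, Di false false ω = false ∧ Di false true ω = false)
    (p10 p11 : Ω → ℝ)
    (hp10 : p10 =ᵐ[P]
      P[(fun ω => Set.indicator ({x | Zi x = true} ∩ {x | Zj x = false}) (fun _ => (1:ℝ)) ω)|m])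
    (hp11 : p11 =ᵐ[P]
      P[(fun ω => Set.indicator ({x | Zi x = true} ∩ {x | Zj x = true}) (fun _ => (1:ℝ)) ω)|m])
    :
    P[(fun ω => bInd (Di (Zi ω) (Zj ω) ω) * Set.indicator ({x | Zi x = true} ∩ {x | Zj x = false}) (fun _ => (1:ℝ)) ω)|m]
      =ᵐ[P] (fun ω => (P[(fun ω' => Set.indicator ({x | Di true false x = true ∧ Di false true x = false}) (fun _ => (1:ℝ)) ω')|m]) ω * p10 ω)
    ∧ P[(fun ω => bInd (Di (Zi ω) (Zj ω) ω) * Set.indicator ({x | Zi x = true} ∩ {x | Zj x = true}) (fun _ => (1:ℝ)) ω)|m]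
      =ᵐ[P] (fun ω => ((P[(fun ω' => Set.indicator ({x | Di true false x = true ∧ Di false true x = false}) (fun _ => (1:ℝ)) ω')|m]) ω + (P[(fun ω' => Set.indicator ({x | Di true true x = true ∧ Di true false x = false}) (fun _ => (1:ℝ)) ω')|m]) ω) * p11 ω) := by
  -- `m` is also a `MeasurableSpace` instance in scope; pin the ambient one for instance search.
  let := mΩ
  have hcomplier : P⟦{x | Di true false x = true ∧ Di false true x = false} | m⟧ =ᵐ[P]
      P⟦{x | Di true false x = true} | m⟧ :=
    condExp_congr_ae (indicator_and_eq_false_ae_eq (hosn.mono fun _ h => h.2))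
  have hgroup : P⟦{x | Di true true x = true} | m⟧ =ᵐ[P]
      P⟦{x | Di true false x = true} | m⟧ +
        P⟦{x | Di true true x = true ∧ Di true false x = false} | m⟧ := by
    refine (condExp_congr_ae ?_).trans (condExp_add ?_ ?_ m)
    · filter_upwards [hmono] with ω h
      exact indicator_eq_add_indicator_and_eq_false h.2.2
    · exact (integrable_const 1).indicator (hDimeas true false (measurableSet_singleton true))
    · exact (integrable_const 1).indicator
        ((hDimeas true true (measurableSet_singleton true)).inter
          (hDimeas true false (measurableSet_singleton false)))
  constructor
  · filter_upwards [condExp_bInd_mul_indicator_ae_eq hDimeas hZi hZj hCI true false,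
      hcomplier, hp10] with ω h hc hp
    rw [h, hc, hp]
  · filter_upwards [condExp_bInd_mul_indicator_ae_eq hDimeas hZi hZj hCI true true,
      hgroup, hcomplier, hp11] with ω h hg hc hp
    rw [h, hg, Pi.add_apply, hc, hp]

theorem stmt_16
    {Ω : Type*} [mΩ : MeasurableSpace Ω] [StandardBorelSpace Ω] [Nonempty Ω]
    (P : Measure Ω) [IsProbabilityMeasure P]
    {k : ℕ} (X : Ω → (Fin k → ℝ)) (hX : Measurable X)
    (Di : Bool → Bool → Ω → Bool) (Zi Zj : Ω → Bool)
    (hDimeas : ∀ z z', Measurable (Di z z'))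
    (hZi : Measurable Zi) (hZj : Measurable Zj)
    (m : MeasurableSpace Ω)
    (hm_def : m = MeasurableSpace.comap X inferInstance)
    (hm_le : m ≤ mΩ)
    (hCI : CondIndepFun m hm_le
      (fun ω => (fun z z' => Di z z' ω))
      (fun ω => (Zi ω, Zj ω)) P)
    (hmono : ∀ᵐ ω ∂P,
      Di false false ω ≤ Di false true ω ∧ Di false true ω ≤ Di true false ω ∧
        Di true false ω ≤ Di true true ω)
    (hosn : ∀ᵐ ω ∂P, Di false false ω = false ∧ Di false true ω = false)
    (p10 p11 : Ω → ℝ)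
    (hp10meas : Measurable[m] p10) (hp11meas : Measurable[m] p11)
    (hp10 : p10 =ᵐ[P]
      P[(fun ω => Set.indicator ({x | Zi x = true} ∩ {x | Zj x = false}) (fun _ => (1:ℝ)) ω)|m])
    (hp11 : p11 =ᵐ[P]
      P[(fun ω => Set.indicator ({x | Zi x = true} ∩ {x | Zj x = true}) (fun _ => (1:ℝ)) ω)|m])
    :
    P[(fun ω => bInd (Di (Zi ω) (Zj ω) ω) * Set.indicator ({x | Zi x = true} ∩ {x | Zj x = false}) (fun _ => (1:ℝ)) ω)|m]
      =ᵐ[P] (fun ω => (P[(fun ω' => Set.indicator ({x | Di true false x = true ∧ Di false true x = false}) (fun _ => (1:ℝ)) ω')|m]) ω * p10 ω)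
    ∧ P[(fun ω => bInd (Di (Zi ω) (Zj ω) ω) * Set.indicator ({x | Zi x = true} ∩ {x | Zj x = true}) (fun _ => (1:ℝ)) ω)|m]
      =ᵐ[P] (fun ω => ((P[(fun ω' => Set.indicator ({x | Di true false x = true ∧ Di false true x = false}) (fun _ => (1:ℝ)) ω')|m]) ω + (P[(fun ω' => Set.indicator ({x | Di true true x = true ∧ Di true false x = false}) (fun _ => (1:ℝ)) ω')|m]) ω) * p11 ω) :=
  stmt_16_general (mΩ := mΩ) P Di Zi Zj hDimeas hZi hZj m hm_le hCI hmono hosn p10 p11 hp10 hp11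
end

section
/- Distribution of compliance types with n peers: in the general-group setting, suppose (D(z,w))_{z∈{0,1}, 0≤w≤n} is jointly independent of (Z, W) and P[Z=z, W=w] > 0 for all z ∈ {0,1} and w ∈ {0,…,n}, and suppose almost surely D(z,w) is nondecreasing in w for each z and D(1,0) ≥ D(0,n) (monotonicity). Then, with observed treatment D = D(Z,W): P[AT] = E[D | Z=0, W=0]; for every w* with 1 ≤ w* ≤ n, P[SC(w*)] = E[D | Z=0, W=w*] − E[D | Z=0, W=w*−1]; P[C] = E[D | Z=1, W=0] − E[D | Z=0, W=n]; for every w* with 1 ≤ w* ≤ n, P[GC(w*)] = E[D | Z=1, W=w*] − E[D | Z=1, W=w*−1]; and P[NT] = E[1−D | Z=1, W=n]. -/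
open MeasureTheory ProbabilityTheory

lemma bInd_eq_indicator {Ω : Type*} (f : Ω → Bool) :
    (fun ω => bInd (f ω)) = Set.indicator {x | f x = true} (fun _ => (1:ℝ)) := by
  funext ω
  by_cases h : f ω = true <;> simp [bInd, h, Set.indicator]

lemma key {Ω : Type*} [MeasurableSpace Ω] (P : Measure Ω) [IsProbabilityMeasure P]
    (D : Bool → ℕ → Ω → Bool) (Z : Ω → Bool) (W : Ω → ℕ)
    (hDmeas : ∀ z w, Measurable (D z w)) (hZ : Measurable Z) (hW : Measurable W)
    (hindep : IndepFun (fun ω => (fun (z : Bool) (w : ℕ) => D z w ω)) (fun ω => (Z ω, W ω)) P)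
    (z : Bool) (w : ℕ) (hp : 0 < P ({x | Z x = z} ∩ {x | W x = w})) :
    (∫ ω, bInd (D (Z ω) (W ω) ω) ∂(P[|({x | Z x = z} ∩ {x | W x = w})]))
      = (P {x | D z w x = true}).toReal := by
  set s : Set Ω := {x | Z x = z} ∩ {x | W x = w} with hs_def
  have hsZ : MeasurableSet {x | Z x = z} := hZ (measurableSet_singleton z)
  have hsW : MeasurableSet {x | W x = w} := hW (measurableSet_singleton w)
  have hs : MeasurableSet s := hsZ.inter hsW
  have hA : MeasurableSet {x | D z w x = true} := hDmeas z w (measurableSet_singleton true)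
  have hmem : ∀ᵐ ω ∂(P[|s]), ω ∈ s := by
    have h1 : ∀ᵐ ω ∂(P.restrict s), ω ∈ s := ae_restrict_mem hs
    have : (P[|s]) ≪ P.restrict s := by
      rw [ProbabilityTheory.cond]; exact Measure.smul_absolutelyContinuous
    exact this.ae_le h1
  have hcongr : (∫ ω, bInd (D (Z ω) (W ω) ω) ∂(P[|s]))
      = ∫ ω, bInd (D z w ω) ∂(P[|s]) := by
    refine integral_congr_ae ?_
    filter_upwards [hmem] with ω hω
    rw [hω.1, hω.2]
  rw [hcongr, bInd_eq_indicator (fun ω => D z w ω)]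
  have : ∫ ω, Set.indicator {x | D z w x = true} (fun _ => (1:ℝ)) ω ∂(P[|s])
      = ((P[|s]) {x | D z w x = true}).toReal := integral_indicator_one hA
  rw [this]
  congr 1
  rw [cond_apply hs]
  have hA' : MeasurableSet {g : Bool → ℕ → Bool | g z w = true} := by
    have hm : Measurable fun g : Bool → ℕ → Bool => g z w :=
      (measurable_pi_apply w).comp (measurable_pi_apply z)
    exact hm (measurableSet_singleton true)
  have hB' : MeasurableSet ({(z, w)} : Set (Bool × ℕ)) := measurableSet_singleton _
  have hpre1 : (fun ω => (fun (z : Bool) (w : ℕ) => D z w ω)) ⁻¹' {g | g z w = true}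
      = {x | D z w x = true} := rfl
  have hpre2 : (fun ω => (Z ω, W ω)) ⁻¹' ({(z, w)} : Set (Bool × ℕ)) = s := by
    ext ω; simp [hs_def, Prod.ext_iff]
  have hmul := hindep.measure_inter_preimage_eq_mul _ _ hA' hB'
  rw [hpre1, hpre2] at hmul
  rw [Set.inter_comm, hmul]
  rw [mul_comm, mul_assoc, ENNReal.mul_inv_cancel hp.ne' (measure_ne_top P s), mul_one]

lemma measure_diff_ae' {Ω : Type*} [MeasurableSpace Ω] (P : Measure Ω) [IsProbabilityMeasure P]
    {A B : Set Ω} (hB : MeasurableSet B) (hsub : ∀ᵐ x ∂P, x ∈ B → x ∈ A) :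
    (P (A \ B)).toReal = (P A).toReal - (P B).toReal := by
  have hnull : P (B \ A) = 0 := by
    rw [ae_iff] at hsub
    refine measure_mono_null ?_ hsub
    intro x hx
    simp only [Set.mem_setOf_eq]
    push_neg
    exact ⟨hx.1, hx.2⟩
  have h1 : P (A ∩ B) = P B := by
    refine le_antisymm (measure_mono Set.inter_subset_right) ?_
    calc P B ≤ P ((A ∩ B) ∪ (B \ A)) := measure_mono (by intro x hx; by_cases h : x ∈ A <;> simp [hx, h])
    _ ≤ P (A ∩ B) + P (B \ A) := measure_union_le _ _
    _ = P (A ∩ B) := by rw [hnull, add_zero]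
  have h2 := measure_inter_add_diff A hB (μ := P)
  rw [h1] at h2
  have := congrArg ENNReal.toReal h2
  rw [ENNReal.toReal_add (measure_ne_top _ _) (measure_ne_top _ _)] at this
  linarith

theorem stmt_17
    {Ω : Type*} [MeasurableSpace Ω] (P : Measure Ω) [IsProbabilityMeasure P]
    (n : ℕ) (hn : 1 ≤ n)
    (D : Bool → ℕ → Ω → Bool) (Z : Ω → Bool) (W : Ω → ℕ)
    (hDmeas : ∀ z w, Measurable (D z w))
    (hZ : Measurable Z) (hW : Measurable W)
    (hWn : ∀ ω, W ω ≤ n)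
    (hpos : ∀ z : Bool, ∀ w ≤ n, 0 < P ({x | Z x = z} ∩ {x | W x = w}))
    (hindep : IndepFun (fun ω => (fun (z : Bool) (w : ℕ) => D z w ω))
      (fun ω => (Z ω, W ω)) P)
    (hmono : ∀ᵐ ω ∂P,
      (∀ z : Bool, ∀ w w' : ℕ, w ≤ w' → w' ≤ n → D z w ω ≤ D z w' ω) ∧
      D false n ω ≤ D true 0 ω)
    :
    (P {x | D false 0 x = true}).toReal = (∫ ω, bInd (D (Z ω) (W ω) ω) ∂(P[|({x | Z x = false} ∩ {x | W x = 0})]))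
    ∧ (∀ w, 1 ≤ w → w ≤ n →
      (P {x | D false w x = true ∧ D false (w - 1) x = false}).toReal
        = (∫ ω, bInd (D (Z ω) (W ω) ω) ∂(P[|({x | Z x = false} ∩ {x | W x = w})])) - (∫ ω, bInd (D (Z ω) (W ω) ω) ∂(P[|({x | Z x = false} ∩ {x | W x = (w - 1)})])))
    ∧ (P {x | D true 0 x = true ∧ D false n x = false}).toReal
      = (∫ ω, bInd (D (Z ω) (W ω) ω) ∂(P[|({x | Z x = true} ∩ {x | W x = 0})])) - (∫ ω, bInd (D (Z ω) (W ω) ω) ∂(P[|({x | Z x = false} ∩ {x | W x = n})]))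
    ∧ (∀ w, 1 ≤ w → w ≤ n →
      (P {x | D true w x = true ∧ D true (w - 1) x = false}).toReal
        = (∫ ω, bInd (D (Z ω) (W ω) ω) ∂(P[|({x | Z x = true} ∩ {x | W x = w})])) - (∫ ω, bInd (D (Z ω) (W ω) ω) ∂(P[|({x | Z x = true} ∩ {x | W x = (w - 1)})])))
    ∧ (P {x | D true n x = false}).toReal = (∫ ω, (1 - bInd (D (Z ω) (W ω) ω)) ∂(P[|({x | Z x = true} ∩ {x | W x = n})])) := by
  have hkey : ∀ z : Bool, ∀ w ≤ n,
      (∫ ω, bInd (D (Z ω) (W ω) ω) ∂(P[|({x | Z x = z} ∩ {x | W x = w})]))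
        = (P {x | D z w x = true}).toReal :=
    fun z w hw => key P D Z W hDmeas hZ hW hindep z w (hpos z w hw)
  have hdiff : ∀ z : Bool, ∀ w, 1 ≤ w → w ≤ n →
      (P {x | D z w x = true ∧ D z (w - 1) x = false}).toReal
        = (P {x | D z w x = true}).toReal - (P {x | D z (w-1) x = true}).toReal := by
    intro z w hw1 hw2
    have hset : {x | D z w x = true ∧ D z (w - 1) x = false}
        = {x | D z w x = true} \ {x | D z (w-1) x = true} := by
      ext x; simp [Set.mem_diff]
    rw [hset]
    refine measure_diff_ae' P (hDmeas z (w-1) (measurableSet_singleton true)) ?_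
    filter_upwards [hmono] with ω h hx
    have hle := h.1 z (w-1) w (Nat.sub_le w 1) hw2
    rw [hx] at hle
    exact (le_antisymm hle (Bool.le_true _)).symm
  refine ⟨?_, ?_, ?_, ?_, ?_⟩
  · rw [hkey false 0 (Nat.zero_le n)]
  · intro w hw1 hw2
    rw [hkey false w hw2, hkey false (w-1) (le_trans (Nat.sub_le w 1) hw2)]
    exact hdiff false w hw1 hw2
  · rw [hkey true 0 (Nat.zero_le n), hkey false n le_rfl]
    have hset : {x | D true 0 x = true ∧ D false n x = false}
        = {x | D true 0 x = true} \ {x | D false n x = true} := by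
      ext x; simp [Set.mem_diff]
    rw [hset]
    refine measure_diff_ae' P (hDmeas false n (measurableSet_singleton true)) ?_
    filter_upwards [hmono] with ω h hx
    have hle := h.2
    rw [hx] at hle
    exact (le_antisymm hle (Bool.le_true _)).symm
  · intro w hw1 hw2
    rw [hkey true w hw2, hkey true (w-1) (le_trans (Nat.sub_le w 1) hw2)]
    exact hdiff true w hw1 hw2
  · -- never takers
    set s : Set Ω := {x | Z x = true} ∩ {x | W x = n} with hs_def
    have hs : MeasurableSet s :=
      (hZ (measurableSet_singleton true)).inter (hW (measurableSet_singleton n))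
    have hp := hpos true n le_rfl
    have : IsProbabilityMeasure (P[|s]) := cond_isProbabilityMeasure hp.ne'
    have hmem : ∀ᵐ ω ∂(P[|s]), ω ∈ s := by
      have h1 : ∀ᵐ ω ∂(P.restrict s), ω ∈ s := ae_restrict_mem hs
      have h2 : (P[|s]) ≪ P.restrict s := by
        rw [ProbabilityTheory.cond]; exact Measure.smul_absolutelyContinuous
      exact h2.ae_le h1
    have hcongr : (∫ ω, (1 - bInd (D (Z ω) (W ω) ω)) ∂(P[|s]))
        = ∫ ω, (1 - bInd (D true n ω)) ∂(P[|s]) := by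
      refine integral_congr_ae ?_
      filter_upwards [hmem] with ω hω
      rw [hω.1, hω.2]
    have hint : Integrable (fun ω => bInd (D true n ω)) (P[|s]) := by
      rw [bInd_eq_indicator (fun ω => D true n ω)]
      exact (integrable_const (1:ℝ)).indicator (hDmeas true n (measurableSet_singleton true))
    have hsub : (∫ ω, (1 - bInd (D true n ω)) ∂(P[|s]))
        = (∫ _, (1:ℝ) ∂(P[|s])) - ∫ ω, bInd (D true n ω) ∂(P[|s]) :=
      integral_sub (integrable_const 1) hint
    have h1 : (∫ _, (1:ℝ) ∂(P[|s])) = 1 := by simp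
    have h2 : (∫ ω, bInd (D true n ω) ∂(P[|s])) = (P {x | D true n x = true}).toReal := by
      rw [← hkey true n le_rfl]
      refine integral_congr_ae ?_
      filter_upwards [hmem] with ω hω
      rw [hω.1, hω.2]
    rw [hcongr, hsub, h1, h2]
    have hset : {x | D true n x = false} = {x | D true n x = true}ᶜ := by
      ext x; simp
    have hAm : MeasurableSet {x | D true n x = true} := hDmeas true n (measurableSet_singleton true)
    rw [hset, measure_compl hAm (measure_ne_top _ _)]
    rw [measure_univ, ENNReal.toReal_sub_of_le prob_le_one (by norm_num)]
    simp
end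

section
/- Identification under one-sided noncompliance with n peers: in the general-group setting, suppose: (i) the collection ((Y(d,s))_{d,s}, (D(z,w))_{z,w}) is jointly independent of (Z, W); (ii) P[Z=z, W=0] > 0 for z ∈ {0,1}; (iii) almost surely D(z,w) is nondecreasing in w for each z and D(1,0) ≥ D(0,n); (iv) one-sided noncompliance at the group level: almost surely D(0,w) = 0 for all w, and S ≤ W (no peer can be treated without being assigned, so when W = 0 all peers are untreated). Then, with observed outcome Y = Y(D(Z,W), S) and observed treatment D = D(Z,W): E[Y(0,0)] = E[Y | Z=0, W=0]; E[Y(1,0) · 1_C] = E[Y · D | Z=1, W=0]; and E[Y(0,0) · 1_C] = E[Y | Z=0, W=0] − E[Y·(1−D) | Z=1, W=0], where 1_C is the indicator of the complier event C. -/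
open MeasureTheory ProbabilityTheory

/-!
Conditioning on `{Z = z, W = 0}` does not change the law of the potential outcomes and
treatments, by independence, so every conditional mean of a function of them is its
unconditional mean. On that event one-sided noncompliance forces `S = 0`, so the observed
outcome is `Y(D(z,0), 0)`; for `z = 0` also `D(0,0) = 0`. Each identity then reduces to an
unconditional mean of a function of `Y(·,0)` and `D(1,0)`, the third by splitting
`Y(0,0) = Y(0,0)·1_C + Y(0,0)·(1 - 1_C)`.
-/

@[fun_prop]
lemma measurable_bInd : Measurable bInd := measurable_from_top

lemma indicator_setOf_eq_true_eq_bInd {Ω : Type*} (b : Ω → Bool) :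
    {x | b x = true}.indicator (fun _ => (1 : ℝ)) = fun ω => bInd (b ω) := by
  funext ω
  cases h : b ω <;> simp [bInd, h]

lemma mul_bInd_eq_true (f : Bool → ℝ) (b : Bool) : f b * bInd b = f true * bInd b := by
  cases b <;> simp [bInd]

lemma mul_one_sub_bInd_eq_false (f : Bool → ℝ) (b : Bool) :
    f b * (1 - bInd b) = f false * (1 - bInd b) := by
  cases b <;> simp [bInd]

section Integral

variable {Ω : Type*} [MeasurableSpace Ω] {P : Measure Ω} {f : Ω → ℝ} {b : Ω → Bool}

lemma integrable_mul_bInd (hf : Integrable f P) (hb : Measurable b) :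
    Integrable (fun ω => f ω * bInd (b ω)) P := by
  have hind : (fun ω => f ω * bInd (b ω)) = {x | b x = true}.indicator f := by
    funext ω
    cases h : b ω <;> simp [bInd, h]
  rw [hind]
  exact hf.indicator (hb (measurableSet_singleton true))

lemma integrable_mul_one_sub_bInd (hf : Integrable f P) (hb : Measurable b) :
    Integrable (fun ω => f ω * (1 - bInd (b ω))) P :=
  (hf.sub (integrable_mul_bInd hf hb)).congr (.of_forall fun ω => by simp [mul_sub])

lemma integral_mul_bInd_eq_sub (hf : Integrable f P) (hb : Measurable b) :
    ∫ ω, f ω * bInd (b ω) ∂P = ∫ ω, f ω ∂P - ∫ ω, f ω * (1 - bInd (b ω)) ∂P := by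
  simp only [mul_sub, mul_one]
  rw [integral_sub hf (integrable_mul_bInd hf hb), sub_sub_cancel]

end Integral

theorem integral_cond_preimage_of_indepFun {Ω β : Type*} [MeasurableSpace Ω] [MeasurableSpace β]
    {P : Measure Ω} [IsFiniteMeasure P] {f : Ω → ℝ} {V : Ω → β}
    (hfV : IndepFun f V P) (hf : AEStronglyMeasurable f P) (hV : Measurable V)
    {t : Set β} (ht : MeasurableSet t) (hpos : P (V ⁻¹' t) ≠ 0) :
    ∫ ω, f ω ∂P[|V ⁻¹' t] = ∫ ω, f ω ∂P := by
  have hset : ∫ ω in V ⁻¹' t, f ω ∂P = P.real (V ⁻¹' t) * ∫ ω, f ω ∂P :=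
    ((IndepFun_iff_Indep _ _ _).1 hfV.symm).setIntegral_eq_mul (f := id) hV.comap_le
      hf.aemeasurable ⟨t, ht, rfl⟩ aestronglyMeasurable_id
  rw [ProbabilityTheory.cond, integral_smul_measure, hset, ENNReal.toReal_inv, ← measureReal_def,
    smul_eq_mul, inv_mul_cancel_left₀ ((measureReal_ne_zero_iff).2 hpos)]

section Assignment

variable {Ω : Type*} [MeasurableSpace Ω] {P : Measure Ω}
  {Y : Bool → ℕ → Ω → ℝ} {D : Bool → ℕ → Ω → Bool} {Z : Ω → Bool} {W : Ω → ℕ}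

lemma integral_cond_assignment_eq_integral [IsFiniteMeasure P]
    (hZ : Measurable Z) (hW : Measurable W)
    (hindep : IndepFun (fun ω => ((fun d s => Y d s ω), (fun z w => D z w ω)))
      (fun ω => (Z ω, W ω)) P)
    {φ : (Bool → ℕ → ℝ) × (Bool → ℕ → Bool) → ℝ} (hφ : Measurable φ)
    (hint : Integrable (fun ω => φ (fun d s => Y d s ω, fun z w => D z w ω)) P)
    {z : Bool} {w : ℕ} (hpos : 0 < P ({x | Z x = z} ∩ {x | W x = w})) :
    ∫ ω, φ (fun d s => Y d s ω, fun z w => D z w ω) ∂P[|{x | Z x = z} ∩ {x | W x = w}]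
      = ∫ ω, φ (fun d s => Y d s ω, fun z w => D z w ω) ∂P := by
  have hpre : {x | Z x = z} ∩ {x | W x = w} = (fun ω => (Z ω, W ω)) ⁻¹' {(z, w)} := by
    ext ω; simp [Prod.ext_iff]
  rw [hpre] at hpos ⊢
  exact integral_cond_preimage_of_indepFun (hindep.comp hφ measurable_id) hint.1
    (hZ.prodMk hW) (measurableSet_singleton _) hpos.ne'

lemma ae_cond_assignment_zero {S : Ω → ℕ} {n : ℕ} (hZ : Measurable Z) (hW : Measurable W)
    (hosn : ∀ᵐ ω ∂P, (∀ w ≤ n, D false w ω = false) ∧ S ω ≤ W ω) (z : Bool) :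
    ∀ᵐ ω ∂P[|{x | Z x = z} ∩ {x | W x = 0}],
      Z ω = z ∧ W ω = 0 ∧ S ω = 0 ∧ D false 0 ω = false := by
  have hmeas : MeasurableSet ({x | Z x = z} ∩ {x | W x = 0}) :=
    (hZ (measurableSet_singleton z)).inter (hW (measurableSet_singleton 0))
  filter_upwards [ae_cond_mem hmeas, cond_absolutelyContinuous.ae_le hosn]
    with ω ⟨hZω, hWω⟩ ⟨hD, hSW⟩
  exact ⟨hZω, hWω, Nat.le_zero.1 (hWω ▸ hSW), hD 0 n.zero_le⟩

lemma integral_cond_assignment_zero_eq_integral [IsFiniteMeasure P] {S : Ω → ℕ} {n : ℕ}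
    (hZ : Measurable Z) (hW : Measurable W)
    (hindep : IndepFun (fun ω => ((fun d s => Y d s ω), (fun z w => D z w ω)))
      (fun ω => (Z ω, W ω)) P)
    (hosn : ∀ᵐ ω ∂P, (∀ w ≤ n, D false w ω = false) ∧ S ω ≤ W ω)
    {φ : (Bool → ℕ → ℝ) × (Bool → ℕ → Bool) → ℝ} (hφ : Measurable φ)
    (hint : Integrable (fun ω => φ (fun d s => Y d s ω, fun z w => D z w ω)) P)
    {z : Bool} (hpos : 0 < P ({x | Z x = z} ∩ {x | W x = 0})) {g : Ω → ℝ}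
    (hg : ∀ ω, Z ω = z → W ω = 0 → S ω = 0 → D false 0 ω = false →
      g ω = φ (fun d s => Y d s ω, fun z w => D z w ω)) :
    ∫ ω, g ω ∂P[|{x | Z x = z} ∩ {x | W x = 0}]
      = ∫ ω, φ (fun d s => Y d s ω, fun z w => D z w ω) ∂P := by
  rw [← integral_cond_assignment_eq_integral hZ hW hindep hφ hint hpos]
  exact integral_congr_ae ((ae_cond_assignment_zero hZ hW hosn z).mono
    fun ω ⟨hZω, hWω, hSω, hDω⟩ => hg ω hZω hWω hSω hDω)

end Assignment

theorem stmt_18_general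
    {Ω : Type*} [MeasurableSpace Ω] (P : Measure Ω) [IsProbabilityMeasure P]
    (n : ℕ)
    (Y : Bool → ℕ → Ω → ℝ) (D : Bool → ℕ → Ω → Bool)
    (Z : Ω → Bool) (W S : Ω → ℕ)
    (hYint : ∀ d s, Integrable (Y d s) P)
    (hDmeas : ∀ z w, Measurable (D z w))
    (hZ : Measurable Z) (hW : Measurable W)
    (hpos : ∀ z : Bool, 0 < P ({x | Z x = z} ∩ {x | W x = 0}))
    (hindep : IndepFun
      (fun ω => ((fun (d : Bool) (s : ℕ) => Y d s ω), (fun (z : Bool) (w : ℕ) => D z w ω)))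
      (fun ω => (Z ω, W ω)) P)
    (hosn : ∀ᵐ ω ∂P, (∀ w ≤ n, D false w ω = false) ∧ S ω ≤ W ω)
    :
    (∫ ω, Y false 0 ω ∂P) = (∫ ω, (Y (D (Z ω) (W ω) ω) (S ω) ω) ∂(P[|({x | Z x = false} ∩ {x | W x = 0})]))
    ∧ (∫ ω, Y true 0 ω * Set.indicator ({x | D true 0 x = true}) (fun _ => (1:ℝ)) ω ∂P)
      = (∫ ω, (Y (D (Z ω) (W ω) ω) (S ω) ω) * bInd (D (Z ω) (W ω) ω) ∂(P[|({x | Z x = true} ∩ {x | W x = 0})]))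
    ∧ (∫ ω, Y false 0 ω * Set.indicator ({x | D true 0 x = true}) (fun _ => (1:ℝ)) ω ∂P)
      = (∫ ω, (Y (D (Z ω) (W ω) ω) (S ω) ω) ∂(P[|({x | Z x = false} ∩ {x | W x = 0})])) - (∫ ω, (Y (D (Z ω) (W ω) ω) (S ω) ω) * (1 - bInd (D (Z ω) (W ω) ω)) ∂(P[|({x | Z x = true} ∩ {x | W x = 0})])) := by
  have h₁ : ∫ ω, Y (D (Z ω) (W ω) ω) (S ω) ω ∂P[|{x | Z x = false} ∩ {x | W x = 0}]
      = ∫ ω, Y false 0 ω ∂P :=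
    integral_cond_assignment_zero_eq_integral hZ hW hindep hosn (φ := fun p => p.1 false 0)
      (by fun_prop) (hYint false 0) (hpos false) fun ω hZω hWω hSω hDω => by
        rw [hZω, hWω, hSω, hDω]
  have h₂ : ∫ ω, Y (D (Z ω) (W ω) ω) (S ω) ω * bInd (D (Z ω) (W ω) ω)
        ∂P[|{x | Z x = true} ∩ {x | W x = 0}]
      = ∫ ω, Y true 0 ω * bInd (D true 0 ω) ∂P :=
    integral_cond_assignment_zero_eq_integral hZ hW hindep hosn
      (φ := fun p => p.1 true 0 * bInd (p.2 true 0)) (by fun_prop)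
      (integrable_mul_bInd (hYint true 0) (hDmeas true 0)) (hpos true) fun ω hZω hWω hSω _ => by
        rw [hZω, hWω, hSω]
        exact mul_bInd_eq_true (fun d => Y d 0 ω) _
  have h₃ : ∫ ω, Y (D (Z ω) (W ω) ω) (S ω) ω * (1 - bInd (D (Z ω) (W ω) ω))
        ∂P[|{x | Z x = true} ∩ {x | W x = 0}]
      = ∫ ω, Y false 0 ω * (1 - bInd (D true 0 ω)) ∂P :=
    integral_cond_assignment_zero_eq_integral hZ hW hindep hosn
      (φ := fun p => p.1 false 0 * (1 - bInd (p.2 true 0))) (by fun_prop)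
      (integrable_mul_one_sub_bInd (hYint false 0) (hDmeas true 0)) (hpos true)
      fun ω hZω hWω hSω _ => by
        rw [hZω, hWω, hSω]
        exact mul_one_sub_bInd_eq_false (fun d => Y d 0 ω) _
  simp only [indicator_setOf_eq_true_eq_bInd]
  exact ⟨h₁.symm, h₂.symm, (integral_mul_bInd_eq_sub (hYint false 0) (hDmeas true 0)).trans
    (congrArg₂ (· - ·) h₁.symm h₃.symm)⟩

theorem stmt_18
    {Ω : Type*} [MeasurableSpace Ω] (P : Measure Ω) [IsProbabilityMeasure P]
    (n : ℕ) (hn : 1 ≤ n)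
    (Y : Bool → ℕ → Ω → ℝ) (D : Bool → ℕ → Ω → Bool)
    (Z : Ω → Bool) (W S : Ω → ℕ)
    (hYmeas : ∀ d s, Measurable (Y d s))
    (hYint : ∀ d s, Integrable (Y d s) P)
    (hDmeas : ∀ z w, Measurable (D z w))
    (hZ : Measurable Z) (hW : Measurable W) (hS : Measurable S)
    (hWn : ∀ ω, W ω ≤ n) (hSn : ∀ ω, S ω ≤ n)
    (hpos : ∀ z : Bool, 0 < P ({x | Z x = z} ∩ {x | W x = 0}))
    (hindep : IndepFun
      (fun ω => ((fun (d : Bool) (s : ℕ) => Y d s ω), (fun (z : Bool) (w : ℕ) => D z w ω)))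
      (fun ω => (Z ω, W ω)) P)
    (hmono : ∀ᵐ ω ∂P,
      (∀ z : Bool, ∀ w w' : ℕ, w ≤ w' → w' ≤ n → D z w ω ≤ D z w' ω) ∧
      D false n ω ≤ D true 0 ω)
    (hosn : ∀ᵐ ω ∂P, (∀ w ≤ n, D false w ω = false) ∧ S ω ≤ W ω)
    :
    (∫ ω, Y false 0 ω ∂P) = (∫ ω, (Y (D (Z ω) (W ω) ω) (S ω) ω) ∂(P[|({x | Z x = false} ∩ {x | W x = 0})]))
    ∧ (∫ ω, Y true 0 ω * Set.indicator ({x | D true 0 x = true}) (fun _ => (1:ℝ)) ω ∂P)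
      = (∫ ω, (Y (D (Z ω) (W ω) ω) (S ω) ω) * bInd (D (Z ω) (W ω) ω) ∂(P[|({x | Z x = true} ∩ {x | W x = 0})]))
    ∧ (∫ ω, Y false 0 ω * Set.indicator ({x | D true 0 x = true}) (fun _ => (1:ℝ)) ω ∂P)
      = (∫ ω, (Y (D (Z ω) (W ω) ω) (S ω) ω) ∂(P[|({x | Z x = false} ∩ {x | W x = 0})])) - (∫ ω, (Y (D (Z ω) (W ω) ω) (S ω) ω) * (1 - bInd (D (Z ω) (W ω) ω)) ∂(P[|({x | Z x = true} ∩ {x | W x = 0})])) :=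
  stmt_18_general P n Y D Z W S hYint hDmeas hZ hW hpos hindep hosn
end

section
/- Observed conditional mean expansion: under Assumption 1, for every (z,z') ∈ {0,1}², E[Y | Z_i=z, Z_j=z'] = E[Y(0,0)] + E[(Y(1,0)−Y(0,0)) · D_i(z,z') · (1−D_j(z',z))] + E[(Y(0,1)−Y(0,0)) · (1−D_i(z,z')) · D_j(z',z)] + E[(Y(1,1)−Y(0,0)) · D_i(z,z') · D_j(z',z)]. -/
open MeasureTheory ProbabilityTheory

/-! On the event `{Zᵢ = z, Zⱼ = z'}` the observed outcome coincides with
`Y (Dᵢ(z,z'), Dⱼ(z',z))`, a measurable function of the potential outcomes and treatments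
alone. By the IV assumption it is independent of `(Zᵢ, Zⱼ)`, so conditioning on that event
leaves its mean unchanged. The expansion is the identity
`f d d' = f 0 0 + (f 1 0 - f 0 0) d (1 - d') + (f 0 1 - f 0 0) (1 - d) d' + (f 1 1 - f 0 0) d d'`
for Boolean `d, d'`, integrated term by term. -/

@[simp] lemma bInd_true : bInd true = 1 := rfl

@[simp] lemma bInd_false : bInd false = 0 := rfl

lemma apply_eq_add_bInd_effects (f : Bool → Bool → ℝ) (d d' : Bool) :
    f d d' = f false false
      + (f true false - f false false) * bInd d * (1 - bInd d')
      + (f false true - f false false) * (1 - bInd d) * bInd d'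
      + (f true true - f false false) * bInd d * bInd d' := by
  cases d <;> cases d' <;> simp

lemma apply_comp_eq_add_bInd_effects {Ω : Type*} (Y : Bool → Bool → Ω → ℝ) (D D' : Ω → Bool) :
    (fun ω => Y (D ω) (D' ω) ω) = fun ω => Y false false ω
      + (Y true false ω - Y false false ω) * bInd (D ω) * (1 - bInd (D' ω))
      + (Y false true ω - Y false false ω) * (1 - bInd (D ω)) * bInd (D' ω)
      + (Y true true ω - Y false false ω) * bInd (D ω) * bInd (D' ω) :=
  funext fun ω => apply_eq_add_bInd_effects (fun d d' => Y d d' ω) (D ω) (D' ω)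

section

variable {Ω : Type*} [MeasurableSpace Ω] {μ : Measure Ω}

lemma MeasureTheory.Integrable.mul_comp_bool {f : Ω → ℝ} (hf : Integrable f μ) {D : Ω → Bool}
    (hD : Measurable D) (c : Bool → ℝ) : Integrable (fun ω => f ω * c (D ω)) μ := by
  simp_rw [mul_comm (f _)]
  refine hf.bdd_mul (c := max ‖c true‖ ‖c false‖)
    (Measurable.of_discrete.comp hD).aestronglyMeasurable (.of_forall fun ω => ?_)
  cases D ω <;> simp

section Selection

variable {Y : Bool → Bool → Ω → ℝ} {D D' : Ω → Bool}
  (hY : ∀ d d', Integrable (Y d d') μ) (hD : Measurable D) (hD' : Measurable D')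
include hY hD hD'

lemma integrable_sub_mul_comp_bool_mul_comp_bool (d d' : Bool) (c c' : Bool → ℝ) :
    Integrable (fun ω => (Y d d' ω - Y false false ω) * c (D ω) * c' (D' ω)) μ :=
  (((hY d d').sub (hY false false)).mul_comp_bool hD c).mul_comp_bool hD' c'

lemma integrable_apply_comp : Integrable (fun ω => Y (D ω) (D' ω) ω) μ := by
  rw [apply_comp_eq_add_bInd_effects Y D D']
  exact (((hY false false).add
    (integrable_sub_mul_comp_bool_mul_comp_bool hY hD hD' true false bInd (1 - bInd ·))).add
    (integrable_sub_mul_comp_bool_mul_comp_bool hY hD hD' false true (1 - bInd ·) bInd)).add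
    (integrable_sub_mul_comp_bool_mul_comp_bool hY hD hD' true true bInd bInd)

lemma integral_apply_comp_eq_add_bInd_effects :
    ∫ ω, Y (D ω) (D' ω) ω ∂μ = ∫ ω, Y false false ω ∂μ
      + ∫ ω, (Y true false ω - Y false false ω) * bInd (D ω) * (1 - bInd (D' ω)) ∂μ
      + ∫ ω, (Y false true ω - Y false false ω) * (1 - bInd (D ω)) * bInd (D' ω) ∂μ
      + ∫ ω, (Y true true ω - Y false false ω) * bInd (D ω) * bInd (D' ω) ∂μ := by
  have h10 := integrable_sub_mul_comp_bool_mul_comp_bool hY hD hD' true false bInd (1 - bInd ·)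
  have h01 := integrable_sub_mul_comp_bool_mul_comp_bool hY hD hD' false true (1 - bInd ·) bInd
  have h11 := integrable_sub_mul_comp_bool_mul_comp_bool hY hD hD' true true bInd bInd
  have h0 := (hY false false).add h10
  rw [apply_comp_eq_add_bInd_effects Y D D', integral_add ?_ h11, integral_add ?_ h01,
    integral_add (hY false false) h10]
  exacts [h0, h0.add h01]

end Selection

lemma ProbabilityTheory.IndepFun.integral_comp_cond_preimage [IsFiniteMeasure μ]
    {β γ : Type*} [MeasurableSpace β] [MeasurableSpace γ] {f : Ω → β} {g : Ω → γ}
    (hfg : IndepFun f g μ) {φ : β → ℝ} (hφ : Measurable φ)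
    (hint : Integrable (fun ω => φ (f ω)) μ) (hg : Measurable g)
    {s : Set γ} (hs : MeasurableSet s) (hpos : μ (g ⁻¹' s) ≠ 0) :
    ∫ ω, φ (f ω) ∂μ[|g ⁻¹' s] = ∫ ω, φ (f ω) ∂μ := by
  have hgs : MeasurableSet (g ⁻¹' s) := hg hs
  have hone : Measurable (s.indicator fun _ => (1 : ℝ)) := measurable_const.indicator hs
  have hprod := (hfg.comp hφ hone).integral_fun_mul_eq_mul_integral
    hint.aestronglyMeasurable (hone.comp hg).aestronglyMeasurable
  have hind : ∀ ω, φ (f ω) * s.indicator (fun _ => (1 : ℝ)) (g ω)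
      = (g ⁻¹' s).indicator (fun ω => φ (f ω)) ω := by
    intro ω
    by_cases h : g ω ∈ s <;> simp [h]
  simp only [Function.comp_apply, hind, integral_indicator hgs] at hprod
  have hmass : ∫ ω, s.indicator (fun _ => (1 : ℝ)) (g ω) ∂μ = μ.real (g ⁻¹' s) := by
    simp_rw [← Set.indicator_comp_right g]
    exact integral_indicator_one hgs
  have hreal : μ.real (g ⁻¹' s) ≠ 0 := ENNReal.toReal_ne_zero.mpr ⟨hpos, measure_ne_top μ _⟩
  rw [cond, integral_smul_measure, hprod, hmass, ENNReal.toReal_inv, ← measureReal_def,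
    smul_eq_mul, mul_comm (∫ _, _ ∂μ), inv_mul_cancel_left₀ hreal]

end

theorem stmt_19_general
    {Ω : Type*} [MeasurableSpace Ω] (P : Measure Ω) [IsProbabilityMeasure P]
    (Y : Bool → Bool → Ω → ℝ) (Di Dj : Bool → Bool → Ω → Bool)
    (Zi Zj : Ω → Bool)
    (hYint : ∀ d d', Integrable (Y d d') P)
    (hDimeas : ∀ z z', Measurable (Di z z'))
    (hDjmeas : ∀ z z', Measurable (Dj z z'))
    (hZi : Measurable Zi) (hZj : Measurable Zj)
    (hpos : ∀ z z', 0 < P ({x | Zi x = z} ∩ {x | Zj x = z'}))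
    (hIV : IndepFun
      (fun ω => ((fun d d' => Y d d' ω),
                 (fun z z' => Di z z' ω),
                 (fun z z' => Dj z z' ω)))
      (fun ω => (Zi ω, Zj ω)) P)
    :
    ∀ z z' : Bool,
    (∫ ω, (Y (Di (Zi ω) (Zj ω) ω) (Dj (Zj ω) (Zi ω) ω) ω) ∂(P[|({x | Zi x = z} ∩ {x | Zj x = z'})]))
    = (∫ ω, Y false false ω ∂P)
      + (∫ ω, (Y true false ω - Y false false ω) * bInd (Di z z' ω) * (1 - bInd (Dj z' z ω)) ∂P)
      + (∫ ω, (Y false true ω - Y false false ω) * (1 - bInd (Di z z' ω)) * bInd (Dj z' z ω) ∂P)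
      + (∫ ω, (Y true true ω - Y false false ω) * bInd (Di z z' ω) * bInd (Dj z' z ω) ∂P) := by
  intro z z'
  have hA : {x | Zi x = z} ∩ {x | Zj x = z'} = (fun ω => (Zi ω, Zj ω)) ⁻¹' {(z, z')} := by
    ext; simp
  have hAmeas : MeasurableSet ({x | Zi x = z} ∩ {x | Zj x = z'}) :=
    (hZi (measurableSet_singleton z)).inter (hZj (measurableSet_singleton z'))
  have hobserved : ∀ᵐ ω ∂P[|{x | Zi x = z} ∩ {x | Zj x = z'}],
      Y (Di (Zi ω) (Zj ω) ω) (Dj (Zj ω) (Zi ω) ω) ω = Y (Di z z' ω) (Dj z' z ω) ω := by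
    filter_upwards [ae_cond_mem hAmeas] with ω ⟨hzi, hzj⟩
    rw [show Zi ω = z from hzi, show Zj ω = z' from hzj]
  have hselect : Measurable fun p : (Bool → Bool → ℝ) × (Bool → Bool → Bool) ×
      (Bool → Bool → Bool) => p.1 (p.2.1 z z') (p.2.2 z' z) :=
    measurable_from_prod_countable_left fun _ => by dsimp only; fun_prop
  rw [integral_congr_ae hobserved, hA, hIV.integral_comp_cond_preimage hselect
    (integrable_apply_comp hYint (hDimeas z z') (hDjmeas z' z)) (hZi.prodMk hZj)
    (measurableSet_singleton _) (hA ▸ (hpos z z').ne'),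
    integral_apply_comp_eq_add_bInd_effects hYint (hDimeas z z') (hDjmeas z' z)]

theorem stmt_19
    {Ω : Type*} [MeasurableSpace Ω] (P : Measure Ω) [IsProbabilityMeasure P]
    (Y : Bool → Bool → Ω → ℝ) (Di Dj : Bool → Bool → Ω → Bool)
    (Zi Zj : Ω → Bool)
    (hYmeas : ∀ d d', Measurable (Y d d'))
    (hYint : ∀ d d', Integrable (Y d d') P)
    (hDimeas : ∀ z z', Measurable (Di z z'))
    (hDjmeas : ∀ z z', Measurable (Dj z z'))
    (hZi : Measurable Zi) (hZj : Measurable Zj)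
    (hpos : ∀ z z', 0 < P ({x | Zi x = z} ∩ {x | Zj x = z'}))
    (hIV : IndepFun
      (fun ω => ((fun d d' => Y d d' ω),
                 (fun z z' => Di z z' ω),
                 (fun z z' => Dj z z' ω)))
      (fun ω => (Zi ω, Zj ω)) P)
    :
    ∀ z z' : Bool,
    (∫ ω, (Y (Di (Zi ω) (Zj ω) ω) (Dj (Zj ω) (Zi ω) ω) ω) ∂(P[|({x | Zi x = z} ∩ {x | Zj x = z'})]))
    = (∫ ω, Y false false ω ∂P)
      + (∫ ω, (Y true false ω - Y false false ω) * bInd (Di z z' ω) * (1 - bInd (Dj z' z ω)) ∂P)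
      + (∫ ω, (Y false true ω - Y false false ω) * (1 - bInd (Di z z' ω)) * bInd (Dj z' z ω) ∂P)
      + (∫ ω, (Y true true ω - Y false false ω) * bInd (Di z z' ω) * bInd (Dj z' z ω) ∂P) :=
  stmt_19_general P Y Di Dj Zi Zj hYint hDimeas hDjmeas hZi hZj hpos hIV
end
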